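/- Let $w : \mathbb{R} \to \mathbb{R}$ be twice differentiable with $0 < L \leq w \leq U$ and $|w''| \leq M$ everywhere. Define $Q(x;\sigma) = \frac{\int k_{\sqrt{2}\sigma}(y;x) w(y)\,dy}{\int k_\sigma(y;x) w(y)\,dy}$. Then for all $x \in \mathbb{R}$ and $\sigma > 0$ with $M\sigma^2 < 2L$, we have $\frac{w(x) - M\sigma^2}{w(x) + \tfrac{M}{2}\sigma^2} \leq Q(x;\sigma) \leq \frac{w(x) + M\sigma^2}{w(x) - \tfrac{M}{2}\sigma^2}$. -/

import Mathlib

/-!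
Integrate the second-order Taylor expansion of `w` at `x` against a Gaussian of mean `x` and
variance `s²`: the constant term gives `w x`, the linear term has mean zero, and the remainder,
at most `M / 2 * (y - x) ^ 2` in absolute value, contributes at most `M / 2 * s²`. Taking
`s² = 2σ²` for the numerator and `s² = σ²` for the denominator, which stays positive because
`M σ² < 2L ≤ 2 w x`, and dividing gives the bounds.
-/

open MeasureTheory Real

/-- Gaussian density with mean `m` and standard deviation `σ`, evaluated at `y`. -/
noncomputable def gauss (σ m y : ℝ) : ℝ :=
  (Real.sqrt (2 * Real.pi) * σ)⁻¹ * Real.exp (-(y - m) ^ 2 / (2 * σ ^ 2))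

/-- The ratio `Q` of the Gaussian-weighted integrals of `w` with standard deviations
`√2 σ` and `σ`. -/
noncomputable def Qfun (w : ℝ → ℝ) (σ x : ℝ) : ℝ :=
  (∫ y : ℝ, gauss (Real.sqrt 2 * σ) x y * w y) / ∫ y : ℝ, gauss σ x y * w y

open ProbabilityTheory Set

lemma abs_sub_le_of_abs_deriv_le_mul_abs {f f' : ℝ → ℝ} {C a : ℝ}
    (hf : ∀ t, HasDerivAt f (f' t) t) (bound : ∀ t, |f' t| ≤ C * |t - a|) (b : ℝ) :
    |f b - f a| ≤ C / 2 * (b - a) ^ 2 := by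
  wlog hab : a ≤ b generalizing f f' a b
  · have hreflect := this (f := fun t => f (-t)) (f' := fun t => -f' (-t)) (a := -a)
      (fun t => ((hf (-t)).comp t (hasDerivAt_neg t)).congr_deriv (mul_neg_one _))
      (fun t => by rw [abs_neg, ← abs_neg (t - -a)]; convert bound (-t) using 3; ring)
      (-b) (by linarith)
    convert hreflect using 2 <;> ring_nf
  have hB : ∀ t, HasDerivAt (fun t => C / 2 * (t - a) ^ 2) (C * (t - a)) t := fun t =>
    ((((hasDerivAt_id t).sub_const a).pow 2).const_mul (C / 2)).congr_deriv (by simp; ring)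
  refine image_norm_le_of_norm_deriv_right_le_deriv_boundary (f := fun t => f t - f a)
    (fun t _ => ((hf t).sub_const (f a)).continuousAt.continuousWithinAt)
    (fun t _ => ((hf t).sub_const (f a)).hasDerivWithinAt) (by simp) hB
    (fun t ht => ?_) ⟨hab, le_rfl⟩
  simpa [abs_of_nonneg (sub_nonneg.2 ht.1)] using bound t

lemma abs_taylor_remainder_le {w w' w'' : ℝ → ℝ} {M : ℝ}
    (hw' : ∀ x, HasDerivAt w (w' x) x) (hw'' : ∀ x, HasDerivAt w' (w'' x) x)
    (hM : ∀ x, |w'' x| ≤ M) (x y : ℝ) :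
    |w y - w x - w' x * (y - x)| ≤ M / 2 * (y - x) ^ 2 := by
  have hLip : ∀ t, |w' t - w' x| ≤ M * |t - x| := fun t => by
    simpa using Convex.norm_image_sub_le_of_norm_hasDerivWithin_le
      (fun u _ => (hw'' u).hasDerivWithinAt) (fun u _ => hM u) convex_univ (mem_univ x)
      (mem_univ t)
  have hφ : ∀ t, HasDerivAt (fun t => w t - w' x * (t - x)) (w' t - w' x) t := fun t =>
    ((hw' t).sub (((hasDerivAt_id t).sub_const x).const_mul (w' x))).congr_deriv (by simp)
  simpa [sub_right_comm] using abs_sub_le_of_abs_deriv_le_mul_abs hφ hLip y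

lemma abs_integral_sub_apply_integral_le {μ : Measure ℝ} [IsProbabilityMeasure μ]
    (hμ : MemLp id 2 μ) {w w' w'' : ℝ → ℝ} {M : ℝ}
    (hw' : ∀ x, HasDerivAt w (w' x) x) (hw'' : ∀ x, HasDerivAt w' (w'' x) x)
    (hM : ∀ x, |w'' x| ≤ M) :
    |∫ y, w y ∂μ - w (∫ y, y ∂μ)| ≤ M / 2 * Var[id; μ] := by
  set m := ∫ y, y ∂μ
  set R : ℝ → ℝ := fun y => w y - w m - w' m * (y - m)
  have hR : ∀ y, |R y| ≤ M / 2 * (y - m) ^ 2 := abs_taylor_remainder_le hw' hw'' hM m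
  have hid : Integrable (fun y => y) μ := hμ.integrable one_le_two
  have hlin : Integrable (fun y => y - m) μ := hid.sub (integrable_const m)
  have hsq : Integrable (fun y => M / 2 * (y - m) ^ 2) μ :=
    ((hμ.sub (memLp_const m)).integrable_sq).const_mul (M / 2)
  have hRint : Integrable R μ := by
    refine hsq.mono' ?_ (ae_of_all _ hR)
    have hw : Continuous w := continuous_iff_continuousAt.2 fun y => (hw' y).continuousAt
    exact (by fun_prop : Continuous R).aestronglyMeasurable
  have hdecomp : ∫ y, w y ∂μ = w m + ∫ y, R y ∂μ := by
    rw [show (fun y => w y) = fun y => w m + w' m * (y - m) + R y from funext fun y => by ring,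
      integral_add (f := fun y => w m + w' m * (y - m))
        ((integrable_const _).add (hlin.const_mul _)) hRint,
      integral_add (integrable_const _) (hlin.const_mul _), integral_const_mul,
      integral_sub hid (integrable_const m)]
    simp [m]
  calc |∫ y, w y ∂μ - w m| = |∫ y, R y ∂μ| := by rw [hdecomp, add_sub_cancel_left]
    _ ≤ ∫ y, M / 2 * (y - m) ^ 2 ∂μ := by
        simpa only [Real.norm_eq_abs] using
          norm_integral_le_of_norm_le (f := R) hsq (ae_of_all _ hR)
    _ = M / 2 * Var[id; μ] := by
        rw [integral_const_mul, variance_eq_integral measurable_id.aemeasurable]; rfl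

lemma gauss_eq_gaussianPDFReal {σ : ℝ} (hσ : 0 < σ) (m y : ℝ) :
    gauss σ m y = gaussianPDFReal m (σ ^ 2).toNNReal y := by
  rw [gauss, gaussianPDFReal, Real.coe_toNNReal _ (sq_nonneg σ),
    sqrt_mul' _ (sq_nonneg σ), sqrt_sq hσ.le]

lemma integral_gauss_mul {σ : ℝ} (hσ : 0 < σ) (m : ℝ) (f : ℝ → ℝ) :
    ∫ y, gauss σ m y * f y = ∫ y, f y ∂gaussianReal m (σ ^ 2).toNNReal := by
  rw [integral_gaussianReal_eq_integral_smul (by simp [hσ.ne'])]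
  simp_rw [gauss_eq_gaussianPDFReal hσ, smul_eq_mul]

lemma abs_integral_gauss_mul_sub_le {w w' w'' : ℝ → ℝ} {M : ℝ}
    (hw' : ∀ x, HasDerivAt w (w' x) x) (hw'' : ∀ x, HasDerivAt w' (w'' x) x)
    (hM : ∀ x, |w'' x| ≤ M) {σ : ℝ} (hσ : 0 < σ) (m : ℝ) :
    |(∫ y, gauss σ m y * w y) - w m| ≤ M / 2 * σ ^ 2 := by
  have h := abs_integral_sub_apply_integral_le (μ := gaussianReal m (σ ^ 2).toNNReal)
    (memLp_id_gaussianReal 2) hw' hw'' hM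
  rwa [integral_id_gaussianReal, variance_id_gaussianReal, Real.coe_toNNReal _ (sq_nonneg σ),
    ← integral_gauss_mul hσ] at h

theorem Q_bounds_general (w w' w'' : ℝ → ℝ) (L U M : ℝ)
    (hw' : ∀ x, HasDerivAt w (w' x) x)
    (hw'' : ∀ x, HasDerivAt w' (w'' x) x)
    (hM : ∀ x, |w'' x| ≤ M)
    (hLU : ∀ x, L ≤ w x ∧ w x ≤ U)
    (x σ : ℝ) (hσ : 0 < σ) (hsmall : M * σ ^ 2 < 2 * L) :
    (w x - M * σ ^ 2) / (w x + M / 2 * σ ^ 2) ≤ Qfun w σ x ∧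
      Qfun w σ x ≤ (w x + M * σ ^ 2) / (w x - M / 2 * σ ^ 2) := by
  have hσ' : 0 < √2 * σ := by positivity
  obtain ⟨hD₁, hD₂⟩ := abs_le.1 (abs_integral_gauss_mul_sub_le hw' hw'' hM hσ x)
  obtain ⟨hN₁, hN₂⟩ := abs_le.1 (abs_integral_gauss_mul_sub_le hw' hw'' hM hσ' x)
  rw [mul_pow, sq_sqrt zero_le_two] at hN₁ hN₂
  have hM0 : 0 ≤ M := (abs_nonneg _).trans (hM 0)
  have hL0 : 0 ≤ L := by linarith [mul_nonneg hM0 (sq_nonneg σ)]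
  have hden : 0 < w x - M / 2 * σ ^ 2 := by linarith [(hLU x).1]
  have hN0 : 0 ≤ ∫ y, gauss (√2 * σ) x y * w y := by
    rw [integral_gauss_mul hσ']
    exact integral_nonneg fun y => hL0.trans (hLU y).1
  constructor
  · exact div_le_div₀ hN0 (by linarith) (by linarith) (by linarith)
  · exact div_le_div₀ (by linarith) (by linarith) hden (by linarith)

theorem Q_bounds (w w' w'' : ℝ → ℝ) (L U M : ℝ)
    (hw' : ∀ x, HasDerivAt w (w' x) x)
    (hw'' : ∀ x, HasDerivAt w' (w'' x) x)
    (hM : ∀ x, |w'' x| ≤ M)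
    (hL : 0 < L) (hLU : ∀ x, L ≤ w x ∧ w x ≤ U)
    (x σ : ℝ) (hσ : 0 < σ) (hsmall : M * σ ^ 2 < 2 * L) :
    (w x - M * σ ^ 2) / (w x + M / 2 * σ ^ 2) ≤ Qfun w σ x ∧
      Qfun w σ x ≤ (w x + M * σ ^ 2) / (w x - M / 2 * σ ^ 2) :=
  Q_bounds_general w w' w'' L U M hw' hw'' hM hLU x σ hσ hsmall
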